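/- arXiv:1901.08805 — 5 statements merged into one kernel-verified Lean document; each statement's English description precedes it below -/
import Mathlib

section
/- Let A, B be disjoint subsets of a metric space (M, δ) that are t-well-separated for t = 16/ε (i.e., δ(a,b) ≥ (16/ε)·max(diam A, diam B) for all a ∈ A, b ∈ B), where 0 < ε ≤ 1. Fix representatives a₀ ∈ A, b₀ ∈ B. Then for all a ∈ A and b ∈ B: δ(a, a₀) + δ(a₀, b₀) + δ(b₀, b) ≤ (1+ε)·δ(a, b). -/
/-- If `A` and `B` are disjoint, bounded and `(16/ε)`-well-separated subsets of a
metric space, `0 < ε ≤ 1`, and `a₀ ∈ A`, `b₀ ∈ B` are representatives, then for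
all `a ∈ A` and `b ∈ B` we have
`δ(a, a₀) + δ(a₀, b₀) + δ(b₀, b) ≤ (1+ε)·δ(a, b)`. -/
theorem wspd_representative_path {M : Type*} [MetricSpace M] (A B : Set M)
    (hdisj : Disjoint A B) (ε : ℝ) (hε0 : 0 < ε) (hε1 : ε ≤ 1)
    (hA : Bornology.IsBounded A) (hB : Bornology.IsBounded B)
    (hsep : ∀ a ∈ A, ∀ b ∈ B,
      (16 / ε) * max (Metric.diam A) (Metric.diam B) ≤ dist a b)
    (a₀ : M) (ha₀ : a₀ ∈ A) (b₀ : M) (hb₀ : b₀ ∈ B)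
    (a : M) (ha : a ∈ A) (b : M) (hb : b ∈ B) :
    dist a a₀ + dist a₀ b₀ + dist b₀ b ≤ (1 + ε) * dist a b := by
  set D := max (Metric.diam A) (Metric.diam B) with hD
  have h1 : dist a a₀ ≤ D := le_trans (Metric.dist_le_diam_of_mem hA ha ha₀) (le_max_left _ _)
  have h2 : dist b₀ b ≤ D := le_trans (Metric.dist_le_diam_of_mem hB hb₀ hb) (le_max_right _ _)
  have h3 : dist a₀ b₀ ≤ dist a b + 2 * D := by
    have := dist_triangle4 a₀ a b b₀
    have h4 : dist a₀ a ≤ D := by rw [dist_comm]; exact h1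
    have h5 : dist b b₀ ≤ D := by rw [dist_comm]; exact h2
    linarith
  have hsep' := hsep a ha b hb
  have hDd : D ≤ ε / 16 * dist a b := by
    rw [div_mul_eq_mul_div, le_div_iff₀ (by norm_num : (0:ℝ) < 16)]
    calc D * 16 = ε * ((16/ε) * D) := by field_simp
    _ ≤ ε * dist a b := by
        exact mul_le_mul_of_nonneg_left hsep' hε0.le
    _ = ε * dist a b := rfl
  have hd0 : 0 ≤ dist a b := dist_nonneg
  nlinarith [mul_nonneg hε0.le hd0]
end

section
/- Let {{A_1,B_1},…,{A_s,B_s}} be a (16/ε)-well-separated pair decomposition of a finite metric space (P, δ) with 0 < ε ≤ 1, and choose representatives a_i ∈ A_i, b_i ∈ B_i. Let G be the graph on P with edges (a_i, b_i) weighted by δ(a_i, b_i). Then G is a (1+ε)-spanner: for all u, v ∈ P, d_G(u,v) ≤ (1+ε)δ(u,v). -/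
open scoped ENNReal

/-- The weighted length of a walk in a graph on a metric space, where each
edge `(u, v)` has weight `dist u v`. -/
noncomputable def walkDist {V : Type*} [MetricSpace V] {G : SimpleGraph V} {u v : V}
    (w : G.Walk u v) : ℝ≥0∞ :=
  ((w.support.zip w.support.tail).map (fun e => ENNReal.ofReal (dist e.1 e.2))).sum

/-- The weighted shortest-path distance between two vertices (`∞` if unreachable). -/
noncomputable def spDist {V : Type*} [MetricSpace V] (G : SimpleGraph V) (u v : V) : ℝ≥0∞ :=
  ⨅ w : G.Walk u v, walkDist w

/-!
By strong induction on `δ(u, v)`: the pair `{A_i, B_i}` separating `u` from `v` has diameters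
at most `(ε/16) δ(u, v)`, so `u` is close to `a_i` and `v` to `b_i` (or the other way round).
The induction hypothesis bounds `d_G(u, a_i)` and `d_G(b_i, v)`, and the edge `a_i b_i` has
length at most `(1 + ε/8) δ(u, v)`; the three pieces add up to at most `(1 + ε) δ(u, v)`.
-/

section

variable {V : Type*} [MetricSpace V] {G : SimpleGraph V}

lemma walkDist_nil {u : V} : walkDist (SimpleGraph.Walk.nil : G.Walk u u) = 0 := by
  simp [walkDist]

lemma walkDist_cons {u v w : V} (h : G.Adj u v) (p : G.Walk v w) :
    walkDist (p.cons h) = ENNReal.ofReal (dist u v) + walkDist p := by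
  simp only [walkDist, SimpleGraph.Walk.support_cons, List.tail_cons]
  rw [← p.cons_tail_support]
  simp only [List.zip_cons_cons, List.map_cons, List.sum_cons, List.tail_cons]

lemma walkDist_append {u v w : V} (p : G.Walk u v) (q : G.Walk v w) :
    walkDist (p.append q) = walkDist p + walkDist q := by
  induction p with
  | nil => simp [walkDist_nil]
  | cons h p ih => simp [SimpleGraph.Walk.cons_append, walkDist_cons, ih, add_assoc]

lemma spDist_le_walkDist {u v : V} (w : G.Walk u v) : spDist G u v ≤ walkDist w :=
  iInf_le _ w

@[simp]
lemma spDist_self (u : V) : spDist G u u = 0 :=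
  nonpos_iff_eq_zero.mp ((spDist_le_walkDist .nil).trans_eq walkDist_nil)

lemma spDist_triangle (u v w : V) : spDist G u w ≤ spDist G u v + spDist G v w := by
  simp only [spDist, ENNReal.iInf_add, ENNReal.add_iInf]
  exact le_iInf₂ fun q p => (iInf_le _ (p.append q)).trans_eq (walkDist_append p q)

lemma spDist_le_of_adj {u v : V} (h : G.Adj u v) : spDist G u v ≤ ENNReal.ofReal (dist u v) :=
  (spDist_le_walkDist (.cons h .nil)).trans_eq (by rw [walkDist_cons, walkDist_nil, add_zero])

/-- Since `dist p q ≤ (1 + 2c) · dist u v`, the detour costs at most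
`(2ct + 1 + 2c) · dist u v`, which is where the condition `htc` comes from. -/
lemma dist_detour_le {t c : ℝ} (ht : 0 ≤ t) (htc : 2 * c * (t + 1) + 1 ≤ t) {u v p q : V}
    (hp : dist u p ≤ c * dist u v) (hq : dist v q ≤ c * dist u v) :
    t * dist u p + dist p q + t * dist q v ≤ t * dist u v := by
  have hpq : dist p q ≤ dist u p + dist u v + dist v q := by
    linarith [dist_triangle p u q, dist_triangle u v q, dist_comm p u]
  rw [dist_comm q v]
  nlinarith [dist_nonneg (x := u) (y := v)]

theorem spDist_le_mul_dist_of_forall_exists_adj [Finite V] {t c : ℝ} (ht : 0 ≤ t)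
    (htc : 2 * c * (t + 1) + 1 ≤ t)
    (hG : ∀ u v, u ≠ v →
      ∃ p q, G.Adj p q ∧ dist u p ≤ c * dist u v ∧ dist v q ≤ c * dist u v)
    (u v : V) : spDist G u v ≤ ENNReal.ofReal (t * dist u v) := by
  have hwf :=
    Finite.wellFounded_of_trans_of_irrefl (InvImage (· < ·) fun x : V × V => dist x.1 x.2)
  refine hwf.induction (C := fun x => spDist G x.1 x.2 ≤ ENNReal.ofReal (t * dist x.1 x.2))
    (u, v) fun ⟨u, v⟩ ih => ?_
  obtain rfl | huv := eq_or_ne u v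
  · simp
  obtain ⟨p, q, hadj, hp, hq⟩ := hG u v huv
  have hD : 0 < dist u v := dist_pos.mpr huv
  have hc : c < 1 := by nlinarith [dist_nonneg (x := u) (y := p)]
  have hup : spDist G u p ≤ ENNReal.ofReal (t * dist u p) := ih (u, p) (by
    change dist u p < dist u v; nlinarith)
  have hqv : spDist G q v ≤ ENNReal.ofReal (t * dist q v) := ih (q, v) (by
    change dist q v < dist u v; rw [dist_comm]; nlinarith)
  calc spDist G u v ≤ spDist G u p + spDist G p q + spDist G q v :=
        (spDist_triangle u q v).trans (add_le_add_left (spDist_triangle u p q) _)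
    _ ≤ ENNReal.ofReal (t * dist u p) + ENNReal.ofReal (dist p q)
          + ENNReal.ofReal (t * dist q v) := by gcongr; exact spDist_le_of_adj hadj
    _ = ENNReal.ofReal (t * dist u p + dist p q + t * dist q v) := by
        rw [ENNReal.ofReal_add (by positivity) (by positivity),
          ENNReal.ofReal_add (by positivity) (by positivity)]
    _ ≤ ENNReal.ofReal (t * dist u v) := ENNReal.ofReal_le_ofReal (dist_detour_le ht htc hp hq)

lemma dist_le_of_mul_diam_le {S : Set V} (hS : Bornology.IsBounded S) {κ d : ℝ} (hκ : 0 < κ)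
    (h : κ * Metric.diam S ≤ d) {x y : V} (hx : x ∈ S) (hy : y ∈ S) :
    dist x y ≤ κ⁻¹ * d := by
  rw [le_inv_mul_iff₀ hκ]
  exact (mul_le_mul_of_nonneg_left (Metric.dist_le_diam_of_mem hS hx hy) hκ.le).trans h

end

/-- Given a `(16/ε)`-well-separated pair decomposition `{A i, B i}, i < s` of a
finite metric space `P` with `0 < ε ≤ 1`, and representatives `a i ∈ A i`,
`b i ∈ B i`, the graph with edges `(a i, b i)` is a `(1+ε)`-spanner. -/
theorem wspd_spanner {P : Type*} [MetricSpace P] [Fintype P] {s : ℕ}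
    (ε : ℝ) (hε0 : 0 < ε) (hε1 : ε ≤ 1)
    (A B : Fin s → Set P)
    (hdisj : ∀ i, Disjoint (A i) (B i))
    (hsep : ∀ i, ∀ a ∈ A i, ∀ b ∈ B i,
      (16 / ε) * max (Metric.diam (A i)) (Metric.diam (B i)) ≤ dist a b)
    (hcover : ∀ u v : P, u ≠ v →
      ∃! i : Fin s, (u ∈ A i ∧ v ∈ B i) ∨ (u ∈ B i ∧ v ∈ A i))
    (a b : Fin s → P) (ha : ∀ i, a i ∈ A i) (hb : ∀ i, b i ∈ B i) :
    ∀ u v : P,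
      spDist (SimpleGraph.fromEdgeSet {e : Sym2 P | ∃ i : Fin s, e = s(a i, b i)}) u v
        ≤ ENNReal.ofReal ((1 + ε) * dist u v) := by
  set G := SimpleGraph.fromEdgeSet {e : Sym2 P | ∃ i : Fin s, e = s(a i, b i)}
  have hadj (i : Fin s) : G.Adj (a i) (b i) :=
    (SimpleGraph.fromEdgeSet_adj _).mpr ⟨⟨i, rfl⟩, (hdisj i).ne_of_mem (ha i) (hb i)⟩
  have hnear (i : Fin s) (x : P) (hx : x ∈ A i) (y : P) (hy : y ∈ B i) :
      dist x (a i) ≤ ε / 16 * dist x y ∧ dist y (b i) ≤ ε / 16 * dist x y := by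
    have hκ : (0 : ℝ) < 16 / ε := by positivity
    have hbdd (S : Set P) : Bornology.IsBounded S := S.toFinite.isBounded
    rw [← inv_div]
    have hsep' := hsep i x hx y hy
    exact ⟨dist_le_of_mul_diam_le (hbdd _) hκ
        ((mul_le_mul_of_nonneg_left (le_max_left _ _) hκ.le).trans hsep') hx (ha i),
      dist_le_of_mul_diam_le (hbdd _) hκ
        ((mul_le_mul_of_nonneg_left (le_max_right _ _) hκ.le).trans hsep') hy (hb i)⟩
  refine spDist_le_mul_dist_of_forall_exists_adj (c := ε / 16) (by positivity) (by nlinarith)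
    fun u v huv => ?_
  obtain ⟨i, (⟨hu, hv⟩ | ⟨hu, hv⟩), -⟩ := hcover u v huv
  · exact ⟨a i, b i, hadj i, hnear i u hu v hv⟩
  · obtain ⟨hvb, hua⟩ := hnear i v hv u hu
    rw [dist_comm v u] at hvb hua
    exact ⟨b i, a i, (hadj i).symm, hua, hvb⟩
end

section
/- In the approximate nearest neighbor algorithm, the invariant holds: after processing point p_i, the candidate c with v = δ(c, q) satisfies v ≤ (1+ε)·min_{1 ≤ j ≤ i} δ(p_j, q). In particular, after processing all n points, the returned point c is a (1+ε)-approximate nearest neighbor of q in P. -/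
variable {M : Type*} [MetricSpace M]

/-- One step of the ANN algorithm: given the current state (candidate `c`, its
distance `v` to the query, and lower bounds `a` on the distances of the points
to the query), process point `p i`: skip it if `a i ≥ v / (1 + ε)`, otherwise
compute `r = δ(p i, q)`, update all lower bounds via the triangle inequality,
and update the candidate if `r < v`. -/
noncomputable def annStep (q : M) (ε : ℝ) (p : ℕ → M)
    (st : M × ℝ × (ℕ → ℝ)) (i : ℕ) : M × ℝ × (ℕ → ℝ) :=
  if st.2.2 i ≥ st.2.1 / (1 + ε) then st
  else
    let r := dist (p i) q
    let a' := fun k => max (st.2.2 k) |dist (p i) (p k) - r|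
    if r < st.2.1 then (p i, r, a') else (st.1, st.2.1, a')

/-- The state of the ANN algorithm after processing points `p 0, …, p i`. -/
noncomputable def annRun (q : M) (ε : ℝ) (p : ℕ → M) : ℕ → M × ℝ × (ℕ → ℝ)
  | 0 => (p 0, dist (p 0) q, fun k => |dist (p 0) (p k) - dist (p 0) q|)
  | i + 1 => annStep q ε p (annRun q ε p i) (i + 1)

/-- The ANN algorithm computes the distance `δ(p i, q)` at step `i` iff the
lower bound on `p i` at that moment is below `v / (1 + ε)`. -/
def annComputed (q : M) (ε : ℝ) (p : ℕ → M) : ℕ → Prop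
  | 0 => True
  | i + 1 => (annRun q ε p i).2.2 (i + 1) < (annRun q ε p i).2.1 / (1 + ε)

/-- Invariant of the ANN algorithm: after processing `p 0, …, p i`, the
candidate `c` with `v = δ(c, q)` satisfies `v ≤ (1+ε) · min_{j ≤ i} δ(p j, q)`.
In particular, after processing all points the returned candidate is a
`(1+ε)`-approximate nearest neighbor of `q`. -/
theorem ann_invariant (q : M) (ε : ℝ) (hε : 0 ≤ ε) (p : ℕ → M) (i : ℕ) :
    (annRun q ε p i).2.1 = dist (annRun q ε p i).1 q ∧
    ∀ j ≤ i, (annRun q ε p i).2.1 ≤ (1 + ε) * dist (p j) q := by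
  have hpos : (0 : ℝ) < 1 + ε := by linarith
  have key : (annRun q ε p i).2.1 = dist (annRun q ε p i).1 q ∧
      (∀ k, (annRun q ε p i).2.2 k ≤ dist (p k) q) ∧
      ∀ j ≤ i, (annRun q ε p i).2.1 ≤ (1 + ε) * dist (p j) q := by
    induction i with
    | zero =>
      refine ⟨rfl, fun k => ?_, fun j hj => ?_⟩
      · simp only [annRun]
        calc |dist (p 0) (p k) - dist (p 0) q| = |dist (p k) (p 0) - dist q (p 0)| := by
              rw [dist_comm (p 0) (p k), dist_comm (p 0) q]
          _ ≤ dist (p k) q := abs_dist_sub_le _ _ _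
      · interval_cases j
        simp only [annRun]
        nlinarith [dist_nonneg (x := p 0) (y := q)]
    | succ n ih =>
      obtain ⟨hv, ha, hmin⟩ := ih
      set st := annRun q ε p n with hst
      have ha' : ∀ k, max (st.2.2 k) |dist (p (n+1)) (p k) - dist (p (n+1)) q|
          ≤ dist (p k) q := by
        intro k
        refine max_le (ha k) ?_
        calc |dist (p (n+1)) (p k) - dist (p (n+1)) q|
            = |dist (p k) (p (n+1)) - dist q (p (n+1))| := by
              rw [dist_comm (p (n+1)) (p k), dist_comm (p (n+1)) q]
          _ ≤ dist (p k) q := abs_dist_sub_le _ _ _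
      have hrun : annRun q ε p (n+1) = annStep q ε p st (n+1) := rfl
      rw [hrun]
      unfold annStep
      by_cases h1 : st.2.2 (n+1) ≥ st.2.1 / (1 + ε)
      · rw [if_pos h1]
        refine ⟨hv, ha, fun j hj => ?_⟩
        rcases Nat.lt_succ_iff_lt_or_eq.mp (Nat.lt_succ_of_le hj) with hj' | rfl
        · exact hmin j (Nat.lt_succ_iff.mp hj')
        · have h2 := le_trans h1 (ha (n+1))
          rw [div_le_iff₀ hpos] at h2
          linarith
      · rw [if_neg h1]
        by_cases h2 : dist (p (n+1)) q < st.2.1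
        · rw [if_pos h2]
          refine ⟨rfl, ha', fun j hj => ?_⟩
          rcases Nat.lt_succ_iff_lt_or_eq.mp (Nat.lt_succ_of_le hj) with hj' | rfl
          · have := hmin j (Nat.lt_succ_iff.mp hj')
            simp only
            linarith
          · simp only
            nlinarith [dist_nonneg (x := p (n+1)) (y := q)]
        · rw [if_neg h2]
          push_neg at h2
          refine ⟨hv, ha', fun j hj => ?_⟩
          rcases Nat.lt_succ_iff_lt_or_eq.mp (Nat.lt_succ_of_le hj) with hj' | rfl
          · exact hmin j (Nat.lt_succ_iff.mp hj')
          · simp only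
            nlinarith [dist_nonneg (x := p (n+1)) (y := q)]
  exact ⟨key.1, key.2.2⟩
end

section
/- Consider the ANN algorithm on a metric space of doubling dimension d with parameter ε > 0. Let v_i denote the candidate distance after iteration i (a non-increasing sequence), and suppose p_k is a minimum of the sequence (r_i > r_k for all i < k). Then v_k ≤ (1+ε)·r_k. -/
variable {M : Type*} [MetricSpace M]

/-- A metric space has doubling dimension `d` if every ball of radius `ρ`
can be covered by `2 ^ d` balls of radius `ρ / 2`. -/
def DoublingDim (X : Type*) [MetricSpace X] (d : ℕ) : Prop :=
  ∀ (y : X) (ρ : ℝ), ∃ s : Finset X, s.card ≤ 2 ^ d ∧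
    Metric.ball y ρ ⊆ ⋃ z ∈ s, Metric.ball z (ρ / 2)

lemma ann_lower_bound_valid (q : M) (ε : ℝ) (p : ℕ → M) :
    ∀ i k, (annRun q ε p i).2.2 k ≤ dist (p k) q := by
  have key : ∀ a b : M, |dist a b - dist a q| ≤ dist b q := fun a b => by
    rw [dist_comm a b, dist_comm a q]; exact abs_dist_sub_le b q a
  intro i
  induction i with
  | zero =>
    intro k
    simpa [annRun] using key (p 0) (p k)
  | succ i ih =>
    intro k
    simp only [annRun, annStep]
    split_ifs with h1 h2
    · exact ih k
    · exact max_le (ih k) (key (p (i + 1)) (p k))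
    · exact max_le (ih k) (key (p (i + 1)) (p k))

/-- If `p k` is a left-to-right minimum of the sequence of distances to the
query (i.e. `r_i > r_k` for all `i < k`), then the candidate distance `v_k`
after iteration `k` of the ANN algorithm satisfies `v_k ≤ (1+ε)·r_k`. -/
theorem ann_minimum_bound {d : ℕ} (hM : DoublingDim M d)
    (q : M) (ε : ℝ) (hε : 0 < ε) (p : ℕ → M) (k : ℕ)
    (hmin : ∀ i < k, dist (p k) q < dist (p i) q) :
    (annRun q ε p k).2.1 ≤ (1 + ε) * dist (p k) q := by
  have hpos : (0 : ℝ) < 1 + ε := by linarith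
  cases k with
  | zero =>
    simp only [annRun]
    nlinarith [dist_nonneg (x := p 0) (y := q)]
  | succ i =>
    have hab := ann_lower_bound_valid q ε p i (i + 1)
    simp only [annRun, annStep]
    split_ifs with h1 h2
    · -- skipped: v unchanged, v ≤ (1+ε) * a ≤ (1+ε) * dist
      have : (annRun q ε p i).2.1 ≤ (1 + ε) * (annRun q ε p i).2.2 (i + 1) := by
        rw [ge_iff_le, div_le_iff₀ hpos] at h1
        linarith
      calc (annRun q ε p i).2.1 ≤ (1 + ε) * (annRun q ε p i).2.2 (i + 1) := this
        _ ≤ (1 + ε) * dist (p (i + 1)) q := by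
            exact mul_le_mul_of_nonneg_left hab (le_of_lt hpos)
    · -- candidate updated to r
      nlinarith [dist_nonneg (x := p (i + 1)) (y := q)]
    · -- computed but not smaller: v ≤ r
      push_neg at h2
      nlinarith [dist_nonneg (x := p (i + 1)) (y := q)]
end

section
/- Let q ∈ M and p_1, …, p_n ∈ M with all distances r_i = δ(p_i, q) distinct, presented in uniformly random order. In the ANN algorithm with parameter ε > 0 on a metric space of doubling dimension d, the expected number of computed distances δ(p_i, q) is at most (4(2+ε)(1+ε)/ε)^d · H_n = O(log n), where H_n is the n-th harmonic number. -/
variable {M : Type*} [MetricSpace M]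

section Inv
variable (q : M) (ε : ℝ) (p : ℕ → M)

/-- current candidate distance -/
noncomputable def annV (i : ℕ) : ℝ := (annRun q ε p i).2.1
/-- current lower bounds -/
noncomputable def annA (i : ℕ) : ℕ → ℝ := (annRun q ε p i).2.2

lemma ann_run_succ_of_not (i : ℕ) (h : ¬ annComputed q ε p (i+1)) :
    annRun q ε p (i+1) = annRun q ε p i := by
  have h' : (annRun q ε p i).2.2 (i+1) ≥ (annRun q ε p i).2.1 / (1 + ε) := by
    simpa [annComputed, not_lt] using h
  simp [annRun, annStep, h']

lemma ann_run_succ_of_comp (i : ℕ) (h : annComputed q ε p (i+1)) :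
    annRun q ε p (i+1) =
      (if dist (p (i+1)) q < (annRun q ε p i).2.1 then (p (i+1), dist (p (i+1)) q,
          fun k => max ((annRun q ε p i).2.2 k) |dist (p (i+1)) (p k) - dist (p (i+1)) q|)
        else ((annRun q ε p i).1, (annRun q ε p i).2.1,
          fun k => max ((annRun q ε p i).2.2 k) |dist (p (i+1)) (p k) - dist (p (i+1)) q|)) := by
  have h' : ¬ ((annRun q ε p i).2.2 (i+1) ≥ (annRun q ε p i).2.1 / (1 + ε)) := by
    simpa [annComputed, not_le] using h
  simp only [annRun, annStep, if_neg h']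

lemma annComp_lt {i : ℕ} (h : annComputed q ε p (i+1)) :
    annA q ε p i (i+1) < annV q ε p i / (1 + ε) := h

lemma annV_succ_le (i : ℕ) : annV q ε p (i+1) ≤ annV q ε p i := by
  unfold annV
  by_cases h : annComputed q ε p (i+1)
  · rw [ann_run_succ_of_comp q ε p i h]
    split_ifs with h2
    · exact le_of_lt h2
    · exact le_refl _
  · rw [ann_run_succ_of_not q ε p i h]

lemma annV_mono {i j : ℕ} (h : i ≤ j) : annV q ε p j ≤ annV q ε p i := by
  induction j with
  | zero => have : i = 0 := Nat.le_zero.mp h; simp [this]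
  | succ k ih =>
    rcases Nat.lt_or_ge i (k+1) with h' | h'
    · exact le_trans (annV_succ_le q ε p k) (ih (Nat.lt_succ_iff.mp h'))
    · have : i = k + 1 := le_antisymm h h'
      simp [this]

lemma annA_succ_le (i k : ℕ) : annA q ε p i k ≤ annA q ε p (i+1) k := by
  unfold annA
  by_cases h : annComputed q ε p (i+1)
  · rw [ann_run_succ_of_comp q ε p i h]
    split_ifs <;> exact le_max_left _ _
  · rw [ann_run_succ_of_not q ε p i h]

lemma annA_mono {i j : ℕ} (h : i ≤ j) (k : ℕ) : annA q ε p i k ≤ annA q ε p j k := by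
  induction j with
  | zero => have : i = 0 := Nat.le_zero.mp h; simp [this]
  | succ m ih =>
    rcases Nat.lt_or_ge i (m+1) with h' | h'
    · exact le_trans (ih (Nat.lt_succ_iff.mp h')) (annA_succ_le q ε p m k)
    · have : i = m + 1 := le_antisymm h h'
      simp [this]

lemma annA_nonneg (i k : ℕ) : 0 ≤ annA q ε p i k := by
  induction i with
  | zero => simpa [annA, annRun] using abs_nonneg _
  | succ m ih => exact le_trans ih (annA_succ_le q ε p m k)

lemma tri_aux (x y : M) : |dist x (p 0) - dist y (p 0)| ≤ dist x y := abs_dist_sub_le x y (p 0)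

lemma annA_le (i k : ℕ) : annA q ε p i k ≤ dist (p k) q := by
  have htri : ∀ j : ℕ, |dist (p j) (p k) - dist (p j) q| ≤ dist (p k) q := by
    intro j
    have h1 := abs_dist_sub_le (p k) q (p j)
    rw [dist_comm (p k) (p j), dist_comm q (p j)] at h1
    exact h1
  induction i with
  | zero => exact htri 0
  | succ m ih =>
    unfold annA at ih ⊢
    by_cases h : annComputed q ε p (m+1)
    · rw [ann_run_succ_of_comp q ε p m h]
      split_ifs <;> exact max_le ih (htri (m+1))
    · rw [ann_run_succ_of_not q ε p m h]; exact ih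

lemma annV_attained (i : ℕ) : ∃ m, m ≤ i ∧ annComputed q ε p m ∧ annV q ε p i = dist (p m) q := by
  induction i with
  | zero => exact ⟨0, le_refl _, trivial, rfl⟩
  | succ m ih =>
    unfold annV at ih ⊢
    by_cases h : annComputed q ε p (m+1)
    · rw [ann_run_succ_of_comp q ε p m h]
      split_ifs with h2
      · exact ⟨m+1, le_refl _, h, rfl⟩
      · obtain ⟨m', hm', hc, he⟩ := ih
        exact ⟨m', le_trans hm' (Nat.le_succ m), hc, he⟩
    · rw [ann_run_succ_of_not q ε p m h]
      obtain ⟨m', hm', hc, he⟩ := ih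
      exact ⟨m', le_trans hm' (Nat.le_succ m), hc, he⟩

lemma annV_nonneg (i : ℕ) : 0 ≤ annV q ε p i := by
  obtain ⟨m, _, _, he⟩ := annV_attained q ε p i
  rw [he]; exact dist_nonneg

lemma annV_le_r (i j : ℕ) (hj : j ≤ i) (hc : annComputed q ε p j) :
    annV q ε p i ≤ dist (p j) q := by
  have key : annV q ε p j ≤ dist (p j) q := by
    cases j with
    | zero => simp [annV, annRun]
    | succ m =>
      unfold annV
      rw [ann_run_succ_of_comp q ε p m hc]
      split_ifs with h2
      · exact le_refl _
      · exact le_of_not_gt h2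
  exact le_trans (annV_mono q ε p hj) key

lemma annA_ge (i j k : ℕ) (hj : j ≤ i) (hc : annComputed q ε p j) :
    |dist (p j) (p k) - dist (p j) q| ≤ annA q ε p i k := by
  have key : |dist (p j) (p k) - dist (p j) q| ≤ annA q ε p j k := by
    cases j with
    | zero => exact le_refl _
    | succ m =>
      unfold annA
      rw [ann_run_succ_of_comp q ε p m hc]
      split_ifs <;> exact le_max_right _ _
  exact le_trans key (annA_mono q ε p hj k)

lemma annV_correct (hε : 0 < ε) (i j : ℕ) (hj : j ≤ i) :
    annV q ε p i ≤ (1 + ε) * dist (p j) q := by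
  have hε1 : (0:ℝ) < 1 + ε := by linarith
  by_cases hc : annComputed q ε p j
  · have := annV_le_r q ε p i j hj hc
    nlinarith [dist_nonneg (x := p j) (y := q)]
  · cases j with
    | zero => exact absurd trivial hc
    | succ m =>
      have h' : annV q ε p m / (1 + ε) ≤ annA q ε p m (m+1) := by
        simpa [annComputed, not_lt, annV, annA] using hc
      have h2 : annA q ε p m (m+1) ≤ dist (p (m+1)) q := annA_le q ε p m (m+1)
      have h3 : annV q ε p i ≤ annV q ε p m := annV_mono q ε p (by omega)
      rw [div_le_iff₀ hε1] at h'
      nlinarith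
end Inv

lemma cover_iter {d : ℕ} (hM : DoublingDim M d)
    (y : M) (ρ : ℝ) (k : ℕ) :
    ∃ T : Finset M, T.card ≤ (2 ^ d) ^ k ∧
      Metric.ball y ρ ⊆ ⋃ z ∈ T, Metric.ball z (ρ / 2 ^ k) := by
  classical
  induction k with
  | zero =>
    refine ⟨{y}, by simp, ?_⟩
    simp
  | succ k ih =>
    obtain ⟨T, hTc, hTs⟩ := ih
    choose f hf1 hf2 using fun z : M => hM z (ρ / 2 ^ k)
    refine ⟨T.biUnion f, ?_, ?_⟩
    · calc (T.biUnion f).card ≤ ∑ z ∈ T, (f z).card := Finset.card_biUnion_le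
      _ ≤ ∑ _z ∈ T, 2 ^ d := Finset.sum_le_sum (fun z _ => hf1 z)
      _ = T.card * 2 ^ d := by rw [Finset.sum_const, smul_eq_mul]
      _ ≤ (2 ^ d) ^ k * 2 ^ d := Nat.mul_le_mul_right _ hTc
      _ = (2 ^ d) ^ (k + 1) := by ring
    · intro x hx
      obtain ⟨z, hz, hxz⟩ := by
        have := hTs hx
        simpa using this
      have := hf2 z hxz
      simp only [Set.mem_iUnion] at this ⊢
      obtain ⟨w, hw, hxw⟩ := by simpa using this
      refine ⟨w, Finset.mem_biUnion.mpr ⟨z, hz, hw⟩, ?_⟩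
      have : ρ / 2 ^ k / 2 = ρ / 2 ^ (k+1) := by ring
      rwa [this] at hxw

lemma packing {d : ℕ} (hM : DoublingDim M d)
    (k : ℕ) (y : M) (ρ t : ℝ) (hρt : ρ / 2 ^ k ≤ t / 2)
    (S : Finset M) (hS : ∀ x ∈ S, x ∈ Metric.ball y ρ)
    (hsep : ∀ x ∈ S, ∀ x' ∈ S, x ≠ x' → t < dist x x') :
    S.card ≤ (2 ^ d) ^ k := by
  obtain ⟨T, hTc, hTs⟩ := cover_iter hM y ρ k
  have hex : ∀ x ∈ S, ∃ z ∈ T, x ∈ Metric.ball z (ρ / 2 ^ k) := by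
    intro x hx
    have := hTs (hS x hx)
    simpa using this
  classical
  set g : M → M := fun x => if h : ∃ z ∈ T, x ∈ Metric.ball z (ρ / 2 ^ k) then h.choose else y
    with hg
  have hgmem : ∀ x ∈ S, g x ∈ T := by
    intro x hx
    rw [hg]
    simp only [dif_pos (hex x hx)]
    exact (hex x hx).choose_spec.1
  have hgball : ∀ x ∈ S, x ∈ Metric.ball (g x) (ρ / 2 ^ k) := by
    intro x hx
    rw [hg]
    simp only [dif_pos (hex x hx)]
    exact (hex x hx).choose_spec.2
  have : S.card ≤ T.card := by
    apply Finset.card_le_card_of_injOn g (fun x hx => hgmem x (by simpa using hx))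
    intro x hx x' hx' hgx
    by_contra hne
    have h1 := hgball x (by simpa using hx)
    have h2 := hgball x' (by simpa using hx')
    rw [Metric.mem_ball] at h1 h2
    have : dist x x' < t := by
      have := dist_triangle x (g x) x'
      rw [hgx] at this
      have h2' : dist (g x') x' < ρ / 2 ^ k := by rwa [dist_comm]
      calc dist x x' ≤ dist x (g x') + dist (g x') x' := by rwa [hgx] at *
      _ < ρ / 2 ^ k + ρ / 2 ^ k := by rw [hgx] at h1; exact add_lt_add h1 h2'
      _ ≤ t / 2 + t / 2 := add_le_add hρt hρt
      _ = t := by ring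
    exact absurd this (not_lt.mpr (le_of_lt (hsep x (by simpa using hx) x' (by simpa using hx') hne)))
  exact le_trans this hTc


lemma count_min {n : ℕ} (hn : 0 < n) (g : Fin n → ℝ) (hg : Function.Injective g)
    {i : ℕ} (hi : i < n) :
    (i + 1) * (@Finset.filter _
        (fun σ : Equiv.Perm (Fin n) =>
          ∀ j < i, g (σ ⟨i % n, Nat.mod_lt i hn⟩) < g (σ ⟨j % n, Nat.mod_lt j hn⟩))
        (Classical.decPred _) Finset.univ).card
      = n.factorial := by
  classical
  set e : ℕ → Fin n := fun b => ⟨b % n, Nat.mod_lt b hn⟩ with he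
  have he_val : ∀ b, (e b).1 = b % n := fun b => rfl
  have he_le : ∀ b, (e b).1 ≤ b := fun b => Nat.mod_le b n
  have he_eq : ∀ x : Fin n, e x.1 = x := by
    intro x; apply Fin.ext; simp [he, Nat.mod_eq_of_lt x.2]
  have he_inj : ∀ b b', b < n → b' < n → e b = e b' → b = b' := by
    intro b b' hb hb' h
    have := congrArg Fin.val h
    simpa [he, Nat.mod_eq_of_lt hb, Nat.mod_eq_of_lt hb'] using this
  set Q : ℕ → Equiv.Perm (Fin n) → Prop :=
    fun b σ => ∀ x : Fin n, x.1 ≤ i → g (σ (e b)) ≤ g (σ x) with hQ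
  set F : ℕ → Finset (Equiv.Perm (Fin n)) := fun b => Finset.univ.filter (Q b) with hF
  -- union over b ∈ range (i+1) is everything
  have hcover : (Finset.range (i+1)).biUnion F = Finset.univ := by
    apply Finset.eq_univ_of_forall
    intro σ
    obtain ⟨b', hb'mem, hb'min⟩ := Finset.exists_min_image
      (Finset.univ.filter (fun x : Fin n => x.1 ≤ i)) (fun x => g (σ x))
      ⟨e 0, by
        simp only [Finset.mem_filter, Finset.mem_univ, true_and]
        exact le_trans (he_le 0) (Nat.zero_le i)⟩
    simp only [Finset.mem_filter, Finset.mem_univ, true_and] at hb'mem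
    refine Finset.mem_biUnion.mpr ⟨b'.1, Finset.mem_range.mpr (by omega), ?_⟩
    simp only [hF, Finset.mem_filter, Finset.mem_univ, true_and, hQ]
    intro x hx
    rw [he_eq b']
    exact hb'min x (by simp [hx])
  -- disjoint
  have hdisj : ∀ b ∈ Finset.range (i+1), ∀ b' ∈ Finset.range (i+1), b ≠ b' →
      Disjoint (F b) (F b') := by
    intro b hb b' hb' hne
    simp only [Finset.mem_range] at hb hb'
    rw [Finset.disjoint_left]
    intro σ h1 h2
    simp only [hF, Finset.mem_filter, Finset.mem_univ, true_and, hQ] at h1 h2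
    have l1 : g (σ (e b)) ≤ g (σ (e b')) := h1 (e b') (le_trans (he_le b') (by omega))
    have l2 : g (σ (e b')) ≤ g (σ (e b)) := h2 (e b) (le_trans (he_le b) (by omega))
    have : σ (e b) = σ (e b') := hg (le_antisymm l1 l2)
    exact hne (he_inj b b' (by omega) (by omega) (σ.injective this))
  -- all fibers have the same card
  have hcard : ∀ b ∈ Finset.range (i+1), (F b).card = (F i).card := by
    intro b hb
    simp only [Finset.mem_range] at hb
    set τ : Equiv.Perm (Fin n) := Equiv.swap (e b) (e i) with hτ
    have hτval : ∀ x : Fin n, x.1 ≤ i → (τ x).1 ≤ i := by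
      intro x hx
      rcases Equiv.swap_apply_def (e b) (e i) x with _
      by_cases h1 : x = e b
      · simp [hτ, h1, Equiv.swap_apply_left]; exact le_trans (he_le i) (le_refl i)
      · by_cases h2 : x = e i
        · simp [hτ, h2, Equiv.swap_apply_right]; exact le_trans (he_le b) (by omega)
        · rw [hτ, Equiv.swap_apply_of_ne_of_ne h1 h2]; exact hx
    have key : ∀ c c', c < i + 1 → c' < i + 1 → ∀ σ, Q c σ → Q c' (σ * Equiv.swap (e c') (e c)) := by
      intro c c' hc hc' σ hQc x hx
      simp only [Equiv.Perm.mul_apply]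
      rw [Equiv.swap_apply_left]
      have hval : ((Equiv.swap (e c') (e c)) x).1 ≤ i := by
        by_cases h1 : x = e c'
        · simp [h1, Equiv.swap_apply_left]; exact le_trans (he_le c) (by omega)
        · by_cases h2 : x = e c
          · simp [h2, Equiv.swap_apply_right]; exact le_trans (he_le c') (by omega)
          · rw [Equiv.swap_apply_of_ne_of_ne h1 h2]; exact hx
      exact hQc _ hval
    apply Finset.card_bij' (fun σ _ => σ * Equiv.swap (e i) (e b))
      (fun σ _ => σ * Equiv.swap (e i) (e b))
    · intro σ hσ
      simp only [hF, Finset.mem_filter, Finset.mem_univ, true_and] at hσ ⊢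
      exact key b i hb (by omega) σ hσ
    · intro σ hσ
      simp only [hF, Finset.mem_filter, Finset.mem_univ, true_and] at hσ ⊢
      have := key i b (by omega) hb σ hσ
      rwa [Equiv.swap_comm (e b) (e i)] at this
    · intro σ _
      rw [mul_assoc, Equiv.swap_mul_self, mul_one]
    · intro σ _
      rw [mul_assoc, Equiv.swap_mul_self, mul_one]
  -- the LTR filter equals F i
  have hLTR : (@Finset.filter _
        (fun σ : Equiv.Perm (Fin n) =>
          ∀ j < i, g (σ ⟨i % n, Nat.mod_lt i hn⟩) < g (σ ⟨j % n, Nat.mod_lt j hn⟩))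
        (Classical.decPred _) Finset.univ) = F i := by
    ext σ
    simp only [hF, Finset.mem_filter, Finset.mem_univ, true_and, hQ]
    constructor
    · intro h x hx
      rcases Nat.lt_or_ge x.1 i with h' | h'
      · have h3 := h x.1 h'
        have h2 : e (x.1) = x := he_eq x
        rw [← h2]
        exact le_of_lt h3
      · have hxi : x = e i := by
          apply Fin.ext
          rw [he_val i, Nat.mod_eq_of_lt hi]; omega
        rw [hxi]
    · intro h j hj
      have hle := h (e j) (le_trans (he_le j) (by omega))
      rcases lt_or_eq_of_le hle with h' | h'
      · exact h'
      · exfalso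
        have : σ (e i) = σ (e j) := hg h'
        have := he_inj i j hi (by omega) (σ.injective this)
        omega
  -- assemble
  have htotal : (Finset.univ : Finset (Equiv.Perm (Fin n))).card = ∑ b ∈ Finset.range (i+1), (F b).card := by
    rw [← hcover, Finset.card_biUnion hdisj]
  rw [hLTR]
  have : ∑ b ∈ Finset.range (i+1), (F b).card = (i+1) * (F i).card := by
    rw [Finset.sum_congr rfl hcard, Finset.sum_const, Finset.card_range, smul_eq_mul]
  rw [← this, ← htotal]
  simp [Fintype.card_perm]


lemma exists_pow2 (x : ℝ) (hx : 1 ≤ x) : ∃ k : ℕ, x ≤ 2 ^ k ∧ (2:ℝ) ^ k ≤ 2 * x := by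
  classical
  obtain ⟨m, hm⟩ := pow_unbounded_of_one_lt x (one_lt_two (α := ℝ))
  have hP : ∃ k : ℕ, x < 2 ^ k := ⟨m, hm⟩
  set k := Nat.find hP with hkdef
  have hk : x < 2 ^ k := Nat.find_spec hP
  refine ⟨k, le_of_lt hk, ?_⟩
  rcases Nat.eq_zero_or_pos k with h | h
  · rw [h]
    norm_num
    linarith
  · have hmin : ¬ (x < 2 ^ (k-1)) := Nat.find_min hP (by omega)
    push_neg at hmin
    have : (2:ℝ) ^ k = 2 * 2 ^ (k-1) := by
      rw [← pow_succ']
      congr 1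
      omega
    rw [this]
    linarith


section PerSeq
lemma per_seq {d : ℕ} (hM : DoublingDim M d) (q : M) {ε : ℝ} (hε : 0 < ε)
    (p : ℕ → M) {n : ℕ} (hn : 0 < n)
    (hinj : ∀ i < n, ∀ j < n, dist (p i) q = dist (p j) q → i = j)
    (k0 : ℕ) (hk0 : 2 * (2 + ε) * (1 + ε) ≤ ε * 2 ^ k0) :
    (@Finset.filter ℕ (fun i => annComputed q ε p i) (Classical.decPred _)
        (Finset.range n)).card
      ≤ (2 ^ d) ^ k0 *
        (@Finset.filter ℕ (fun m => ∀ j < m, dist (p m) q < dist (p j) q)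
          (Classical.decPred _) (Finset.range n)).card := by
  classical
  have hε1 : (0:ℝ) < 1 + ε := by linarith
  set r : ℕ → ℝ := fun i => dist (p i) q with hr
  set LTR : ℕ → Prop := fun m => ∀ j < m, r m < r j with hLTRdef
  have hLTR0 : LTR 0 := fun j hj => absurd hj (Nat.not_lt_zero j)
  set f : ℕ → ℕ := fun i => Nat.findGreatest LTR (i - 1) with hf
  set Comp := (@Finset.filter ℕ (fun i => annComputed q ε p i) (Classical.decPred _)
        (Finset.range n)) with hComp
  set Mins := (@Finset.filter ℕ (fun m => ∀ j < m, dist (p m) q < dist (p j) q)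
          (Classical.decPred _) (Finset.range n)) with hMins
  have hMins_mem : ∀ {m}, m ∈ Mins ↔ m < n ∧ LTR m := by
    intro m
    simp [hMins, Finset.mem_filter, Finset.mem_range, hLTRdef, hr]
  have hComp_mem : ∀ {i}, i ∈ Comp ↔ i < n ∧ annComputed q ε p i := by
    intro i
    simp [hComp, Finset.mem_filter, Finset.mem_range]
  have hfmem : ∀ i ∈ Comp, f i ∈ Mins := by
    intro i hi
    rw [hComp_mem] at hi
    rw [hMins_mem]
    constructor
    · calc f i ≤ i - 1 := Nat.findGreatest_le _
      _ < n := by omega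
    · exact Nat.findGreatest_spec (Nat.zero_le _) hLTR0
  rw [Finset.card_eq_sum_card_fiberwise hfmem]
  have hfiber : ∀ k ∈ Mins, (Comp.filter (fun i => f i = k)).card ≤ (2 ^ d) ^ k0 := by
    intro k hk
    rw [hMins_mem] at hk
    obtain ⟨hkn, hkLTR⟩ := hk
    set B := Comp.filter (fun i => f i = k) with hB
    have hBmem : ∀ {i}, i ∈ B → i < n ∧ annComputed q ε p i ∧ f i = k := by
      intro i hi
      simp only [hB, Finset.mem_filter] at hi
      exact ⟨(hComp_mem.mp hi.1).1, (hComp_mem.mp hi.1).2, hi.2⟩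
    -- k ≤ i - 1 for i ∈ B with i ≥ 1; and i = 0 → k = 0
    have hk_le : ∀ {i}, i ∈ B → 1 ≤ i → k ≤ i - 1 := by
      intro i hi h1
      have := (hBmem hi).2.2
      rw [hf] at this
      calc k = Nat.findGreatest LTR (i-1) := this.symm
      _ ≤ i - 1 := Nat.findGreatest_le _
    have hk0eq : ∀ {i}, i ∈ B → i = 0 → k = 0 := by
      intro i hi h0
      have := (hBmem hi).2.2
      rw [h0] at this
      simpa [hf] using this.symm
    -- r k is ≤ r j' for all j' ≤ i-1 when i ∈ B (uses maximality of findGreatest)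
    have hrk_min : ∀ {i}, i ∈ B → ∀ j', j' ≤ i - 1 → j' < n → r k ≤ r j' := by
      intro i hi j' hj' hj'n
      obtain ⟨m'', hm''mem, hm''min⟩ := Finset.exists_min_image
        (Finset.range (j'+1)) r ⟨j', Finset.mem_range.mpr (by omega)⟩
      rw [Finset.mem_range] at hm''mem
      have hm''n : m'' < n := by omega
      have hLTRm'' : LTR m'' := by
        intro l hl
        have hle := hm''min l (Finset.mem_range.mpr (by omega))
        rcases lt_or_eq_of_le hle with h' | h'
        · exact h'
        · exact absurd (hinj m'' hm''n l (by omega) h') (by omega)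
      have hm''k : m'' ≤ k := by
        have := (hBmem hi).2.2
        rw [hf] at this
        rw [← this]
        exact Nat.le_findGreatest (by omega) hLTRm''
      rcases lt_or_eq_of_le hm''k with h' | h'
      · exact le_of_lt (lt_of_lt_of_le (hkLTR m'' h') (hm''min j' (Finset.mem_range.mpr (by omega))))
      · rw [← h']
        exact hm''min j' (Finset.mem_range.mpr (by omega))
    -- v at time i-1 is ≥ r k for i ∈ B, i ≥ 1
    have hv_ge : ∀ {i}, i ∈ B → 1 ≤ i → r k ≤ annV q ε p (i - 1) := by
      intro i hi h1
      obtain ⟨m', hm'le, hm'c, hm'eq⟩ := annV_attained q ε p (i-1)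
      rw [hm'eq]
      exact hrk_min hi m' hm'le (by have := (hBmem hi).1; omega)
    rcases eq_or_lt_of_le (dist_nonneg : (0:ℝ) ≤ r k) with hrk0 | hrkpos
    · -- r k = 0 : the fiber is contained in {0}
      have hsub : B ⊆ {0} := by
        intro i hi
        rcases Nat.eq_zero_or_pos i with h0 | h1
        · simp [h0]
        · exfalso
          obtain ⟨hin, hic, hif⟩ := hBmem hi
          obtain ⟨j, hj⟩ : ∃ j, i = j + 1 := ⟨i - 1, by omega⟩
          have hkj : k ≤ j := by have := hk_le hi h1; omega
          have hvle : annV q ε p j ≤ (1 + ε) * r k := annV_correct q ε p hε j k hkj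
          have hrk0' : r k = 0 := hrk0.symm
          rw [hrk0'] at hvle
          have hcomp : annA q ε p j (j+1) < annV q ε p j / (1 + ε) := by
            rw [hj] at hic; exact hic
          have h1' : annV q ε p j / (1+ε) ≤ 0 := by
            apply div_nonpos_of_nonpos_of_nonneg _ (le_of_lt hε1)
            linarith
          have := annA_nonneg q ε p j (j+1)
          linarith
      calc B.card ≤ ({0} : Finset ℕ).card := Finset.card_le_card hsub
      _ = 1 := by simp
      _ ≤ (2^d)^k0 := Nat.one_le_pow _ _ (by positivity)
    · -- r k > 0 : packing argument
      obtain ⟨m, hmk, hmc, hmeq⟩ := annV_attained q ε p k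
      set t : ℝ := r k * ε / (1 + ε) with ht
      set ρ : ℝ := (2 + ε) * r k with hρ
      have htpos : 0 < t := by positivity
      have hvk_le : annV q ε p k ≤ (1 + ε) * r k := annV_correct q ε p hε k k (le_refl k)
      -- membership in the ball
      have hball : ∀ i ∈ B, dist (p i) (p m) < ρ := by
        intro i hi
        obtain ⟨hin, hic, hif⟩ := hBmem hi
        rcases Nat.eq_zero_or_pos i with h0 | h1
        · have hk0' : k = 0 := hk0eq hi h0
          have hm0 : m = 0 := by omega
          rw [h0, hm0]
          simp only [dist_self]
          positivity
        · obtain ⟨j, hj⟩ : ∃ j, i = j + 1 := ⟨i - 1, by omega⟩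
          have hkj : k ≤ j := by have := hk_le hi h1; omega
          have hcomp : annA q ε p j (j+1) < annV q ε p j / (1 + ε) := by
            rw [hj] at hic; exact hic
          have h1' : |dist (p m) (p i) - r m| ≤ annA q ε p j i :=
            annA_ge q ε p j m i (le_trans hmk hkj) hmc
          have h2' : annV q ε p j ≤ annV q ε p k := annV_mono q ε p hkj
          have h3' : annV q ε p j / (1+ε) ≤ r k := by
            rw [div_le_iff₀ hε1]
            calc annV q ε p j ≤ annV q ε p k := h2'
            _ ≤ (1+ε) * r k := hvk_le
            _ = r k * (1+ε) := by ring
          have h4' : r m ≤ (1+ε) * r k := by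
            have hmeq' : annV q ε p k = r m := hmeq
            rw [← hmeq']; exact hvk_le
          have h5' : dist (p m) (p i) - r m ≤ annA q ε p j i :=
            le_trans (le_abs_self _) h1'
          have h6' : annA q ε p j i < r k := by
            rw [hj]
            calc annA q ε p j (j+1) < annV q ε p j / (1+ε) := hcomp
            _ ≤ r k := h3'
          rw [dist_comm]
          calc dist (p m) (p i) ≤ annA q ε p j i + r m := by linarith
          _ < r k + (1+ε) * r k := by linarith
          _ = ρ := by rw [hρ]; ring
      -- pairwise separation
      have hpair : ∀ i ∈ B, ∀ i' ∈ B, i < i' → t < dist (p i) (p i') := by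
        intro i hi i' hi' hlt
        obtain ⟨hin, hic, hif⟩ := hBmem hi
        obtain ⟨hin', hic', hif'⟩ := hBmem hi'
        obtain ⟨j, hj⟩ : ∃ j, i' = j + 1 := ⟨i' - 1, by omega⟩
        have hij : i ≤ j := by omega
        have hcomp : annA q ε p j (j+1) < annV q ε p j / (1 + ε) := by
          rw [hj] at hic'; exact hic'
        have h1' : |dist (p i) (p i') - r i| ≤ annA q ε p j i' :=
          annA_ge q ε p j i i' hij hic
        have h2' : annV q ε p j ≤ r i := annV_le_r q ε p j i hij hic
        have h3' : r k ≤ annV q ε p j := by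
          have := hv_ge hi' (by omega)
          rw [hj] at this
          simpa using this
        have h4' : annA q ε p j i' < annV q ε p j / (1+ε) := by rw [hj]; exact hcomp
        have h5' : r i - dist (p i) (p i') ≤ annA q ε p j i' := by
          have := neg_abs_le (dist (p i) (p i') - r i)
          have h := le_trans (neg_le_neg h1') (le_refl _)
          linarith [le_abs_self (r i - dist (p i) (p i')),
            abs_sub_comm (dist (p i) (p i')) (r i), h1',
            le_abs_self (dist (p i) (p i') - r i)]
        have hsepcalc : annV q ε p j - annV q ε p j / (1+ε) = annV q ε p j * ε / (1+ε) := by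
          field_simp
          ring
        have h6' : t ≤ annV q ε p j * ε / (1+ε) := by
          rw [ht]
          gcongr
        calc t ≤ annV q ε p j * ε / (1+ε) := h6'
        _ = annV q ε p j - annV q ε p j / (1+ε) := hsepcalc.symm
        _ ≤ r i - annV q ε p j / (1+ε) := by linarith
        _ < r i - annA q ε p j i' := by linarith
        _ ≤ dist (p i) (p i') := by linarith
      -- apply packing
      have hpinj : Set.InjOn p B := by
        intro i hi j hj hpij
        have : r i = r j := by rw [hr]; simp only; rw [hpij]
        exact hinj i (hBmem hi).1 j (hBmem hj).1 this
      rw [← Finset.card_image_of_injOn hpinj]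
      apply packing hM k0 (p m) ρ t
      · -- ρ / 2^k0 ≤ t / 2
        rw [div_le_div_iff₀ (by positivity) (by norm_num)]
        rw [ht, hρ]
        rw [div_mul_eq_mul_div, le_div_iff₀ hε1]
        nlinarith [mul_le_mul_of_nonneg_left hk0 (le_of_lt hrkpos)]
      · intro x hx
        rw [Finset.mem_image] at hx
        obtain ⟨i, hi, hxi⟩ := hx
        rw [Metric.mem_ball, ← hxi]
        exact hball i hi
      · intro x hx x' hx' hne
        rw [Finset.mem_image] at hx hx'
        obtain ⟨i, hi, hxi⟩ := hx
        obtain ⟨i', hi', hxi'⟩ := hx'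
        rw [← hxi, ← hxi']
        rcases Nat.lt_trichotomy i i' with h' | h' | h'
        · exact hpair i hi i' hi' h'
        · exact absurd (by rw [← hxi, ← hxi', h']) hne
        · rw [dist_comm]
          exact hpair i' hi' i hi h'
  calc ∑ k ∈ Mins, (Comp.filter (fun i => f i = k)).card
      ≤ ∑ _k ∈ Mins, (2^d)^k0 := Finset.sum_le_sum hfiber
  _ = Mins.card * (2^d)^k0 := by rw [Finset.sum_const, smul_eq_mul]
  _ = (2^d)^k0 * Mins.card := Nat.mul_comm _ _
end PerSeq



/-- If the `n` points are presented in uniformly random order (all distances to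
the query being distinct), the expected number of distances to `q` computed by
the ANN algorithm is at most `(4(2+ε)(1+ε)/ε)^d · H_n`, where `H_n` is the
`n`-th harmonic number; this is `O(log n)`. -/
theorem ann_expected_queries {d : ℕ} (hM : DoublingDim M d)
    (q : M) (ε : ℝ) (hε : 0 < ε) {n : ℕ} (hn : 0 < n) (p : Fin n → M)
    (hdist : Function.Injective fun i => dist (p i) q) :
    (∑ σ : Equiv.Perm (Fin n),
        ((@Finset.filter ℕ
            (fun i => annComputed q ε (fun j => p (σ ⟨j % n, Nat.mod_lt j hn⟩)) i)
            (Classical.decPred _) (Finset.range n)).card : ℝ))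
        / Nat.factorial n
      ≤ (4 * (2 + ε) * (1 + ε) / ε) ^ d * ∑ k ∈ Finset.range n, (1 : ℝ) / (k + 1) := by
  classical
  have hε1 : (0:ℝ) < 1 + ε := by linarith
  have hx1 : (1:ℝ) ≤ 2 * (2 + ε) * (1 + ε) / ε := by
    rw [le_div_iff₀ hε]; nlinarith
  obtain ⟨k0, hk0a, hk0b⟩ := exists_pow2 _ hx1
  have hk0' : 2 * (2 + ε) * (1 + ε) ≤ ε * 2 ^ k0 := by
    rw [div_le_iff₀ hε] at hk0a; linarith
  have hC : ((2:ℝ) ^ k0) ≤ 4 * (2 + ε) * (1 + ε) / ε := by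
    calc (2:ℝ)^k0 ≤ 2 * (2*(2+ε)*(1+ε)/ε) := hk0b
    _ = 4*(2+ε)*(1+ε)/ε := by ring
  set K : ℕ := (2^d)^k0 with hK
  set P : Equiv.Perm (Fin n) → ℕ → M := fun σ j => p (σ ⟨j % n, Nat.mod_lt j hn⟩) with hP
  have hinjP : ∀ σ, ∀ i < n, ∀ j < n, dist (P σ i) q = dist (P σ j) q → i = j := by
    intro σ i hi j hj hd
    have h1 : σ ⟨i % n, Nat.mod_lt i hn⟩ = σ ⟨j % n, Nat.mod_lt j hn⟩ := hdist hd
    have h2 := σ.injective h1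
    have h3 := congrArg Fin.val h2
    simpa [Nat.mod_eq_of_lt hi, Nat.mod_eq_of_lt hj] using h3
  have hper : ∀ σ : Equiv.Perm (Fin n),
      (@Finset.filter ℕ (fun i => annComputed q ε (P σ) i) (Classical.decPred _)
          (Finset.range n)).card
        ≤ K * (@Finset.filter ℕ (fun m => ∀ j < m, dist (P σ m) q < dist (P σ j) q)
            (Classical.decPred _) (Finset.range n)).card :=
    fun σ => per_seq hM q hε (P σ) hn (hinjP σ) k0 hk0'
  set Fc : ℕ → ℕ := fun i => (@Finset.filter _
      (fun σ : Equiv.Perm (Fin n) =>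
        ∀ j < i, dist (p (σ ⟨i % n, Nat.mod_lt i hn⟩)) q < dist (p (σ ⟨j % n, Nat.mod_lt j hn⟩)) q)
      (Classical.decPred _) Finset.univ).card with hFc
  have hcount : ∀ i, i < n → (i+1) * Fc i = n.factorial := by
    intro i hi
    exact count_min hn (fun a => dist (p a) q) hdist hi
  have hswap : (∑ σ : Equiv.Perm (Fin n),
      (@Finset.filter ℕ (fun m => ∀ j < m, dist (P σ m) q < dist (P σ j) q)
        (Classical.decPred _) (Finset.range n)).card) = ∑ i ∈ Finset.range n, Fc i := by
    have h1 : ∀ σ : Equiv.Perm (Fin n),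
        (@Finset.filter ℕ (fun m => ∀ j < m, dist (P σ m) q < dist (P σ j) q)
          (Classical.decPred _) (Finset.range n)).card
        = ∑ i ∈ Finset.range n, if (∀ j < i, dist (P σ i) q < dist (P σ j) q) then 1 else 0 := by
      intro σ
      rw [Finset.card_filter]
      apply Finset.sum_congr rfl
      intro i _
      congr
    rw [Finset.sum_congr rfl (fun σ _ => h1 σ), Finset.sum_comm]
    apply Finset.sum_congr rfl
    intro i _
    simp only [hFc]
    rw [Finset.card_filter]
    apply Finset.sum_congr rfl
    intro σ _
    congr
  have hmain : (∑ σ : Equiv.Perm (Fin n),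
      (@Finset.filter ℕ (fun i => annComputed q ε (P σ) i) (Classical.decPred _)
        (Finset.range n)).card) ≤ K * ∑ i ∈ Finset.range n, Fc i := by
    calc (∑ σ : Equiv.Perm (Fin n),
        (@Finset.filter ℕ (fun i => annComputed q ε (P σ) i) (Classical.decPred _)
          (Finset.range n)).card)
        ≤ ∑ σ : Equiv.Perm (Fin n),
            K * (@Finset.filter ℕ (fun m => ∀ j < m, dist (P σ m) q < dist (P σ j) q)
              (Classical.decPred _) (Finset.range n)).card :=
          Finset.sum_le_sum (fun σ _ => hper σ)
    _ = K * ∑ σ : Equiv.Perm (Fin n),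
            (@Finset.filter ℕ (fun m => ∀ j < m, dist (P σ m) q < dist (P σ j) q)
              (Classical.decPred _) (Finset.range n)).card := (Finset.mul_sum _ _ _).symm
    _ = K * ∑ i ∈ Finset.range n, Fc i := by rw [hswap]
  have hfacpos : (0:ℝ) < (n.factorial : ℝ) := by
    exact_mod_cast n.factorial_pos
  rw [div_le_iff₀ hfacpos]
  have hFcR : ∀ i ∈ Finset.range n, (Fc i : ℝ) = (n.factorial : ℝ) * (1/((i:ℝ)+1)) := by
    intro i hi
    rw [Finset.mem_range] at hi
    have h1 := hcount i hi
    have h2 : ((i:ℝ)+1) * (Fc i : ℝ) = (n.factorial : ℝ) := by exact_mod_cast h1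
    have h3 : ((i:ℝ)+1) ≠ 0 := by positivity
    field_simp
    linarith [h2]
  have hKle : (K:ℝ) ≤ (4*(2+ε)*(1+ε)/ε)^d := by
    rw [hK]
    push_cast
    have he : ((2:ℝ)^d)^k0 = ((2:ℝ)^k0)^d := by
      rw [← pow_mul, ← pow_mul, Nat.mul_comm]
    rw [he]
    exact pow_le_pow_left₀ (by positivity) hC d
  have hH : (0:ℝ) ≤ ∑ i ∈ Finset.range n, (1:ℝ)/((i:ℝ)+1) := by positivity
  calc (∑ σ : Equiv.Perm (Fin n),
        ((@Finset.filter ℕ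
            (fun i => annComputed q ε (fun j => p (σ ⟨j % n, Nat.mod_lt j hn⟩)) i)
            (Classical.decPred _) (Finset.range n)).card : ℝ))
      = ((∑ σ : Equiv.Perm (Fin n),
        (@Finset.filter ℕ (fun i => annComputed q ε (P σ) i) (Classical.decPred _)
          (Finset.range n)).card : ℕ) : ℝ) := by push_cast; rfl
  _ ≤ ((K * ∑ i ∈ Finset.range n, Fc i : ℕ) : ℝ) := by exact_mod_cast hmain
  _ = (K:ℝ) * ∑ i ∈ Finset.range n, (Fc i : ℝ) := by push_cast; ring
  _ = (K:ℝ) * ∑ i ∈ Finset.range n, (n.factorial : ℝ) * (1/((i:ℝ)+1)) := by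
      rw [Finset.sum_congr rfl hFcR]
  _ = (K:ℝ) * (n.factorial : ℝ) * ∑ i ∈ Finset.range n, (1:ℝ)/((i:ℝ)+1) := by
      rw [← Finset.mul_sum]; ring
  _ ≤ (4*(2+ε)*(1+ε)/ε)^d * (∑ k ∈ Finset.range n, (1:ℝ)/((k:ℝ)+1)) * (n.factorial : ℝ) := by
      have := mul_le_mul_of_nonneg_right hKle (le_of_lt hfacpos)
      have := mul_le_mul_of_nonneg_right
        (mul_le_mul_of_nonneg_right hKle (le_of_lt hfacpos)) hH
      calc (K:ℝ) * (n.factorial : ℝ) * ∑ i ∈ Finset.range n, (1:ℝ)/((i:ℝ)+1)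
          ≤ (4*(2+ε)*(1+ε)/ε)^d * (n.factorial : ℝ) * ∑ i ∈ Finset.range n, (1:ℝ)/((i:ℝ)+1) := this
      _ = (4*(2+ε)*(1+ε)/ε)^d * (∑ k ∈ Finset.range n, (1:ℝ)/((k:ℝ)+1)) * (n.factorial : ℝ) := by ring
end
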